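/- For every integer n ≥ 1, the Li and Keiper coefficients satisfy λ^L_n = n·λ^K_n; explicitly, (1/(n−1)!)·D^n[ x ↦ x^{n−1}·Log(2ξ(x)) ](1) = (n/n!)·D^n[ z ↦ Log(2ξ(1/(1−z))) ](0), where D^n denotes the n-th iterated complex derivative and Log the principal complex logarithm (both functions are analytic near the evaluation point since 2ξ(1) = 1). -/

import Mathlib

open Complex

/-- The completed zeta function `2ξ(x) := x(x-1)·π^(-x/2)·Γ(x/2)·ζ(x)`. -/
noncomputable def twoXi (x : ℂ) : ℂ :=
  x * (x - 1) * (Real.pi : ℂ) ^ (-x / 2) * Complex.Gamma (x / 2) * riemannZeta x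

/-!
Put `h z = f (1 / (1 - z))` with `f = log 2ξ`, which is analytic at `1` because `2ξ` extends to
the entire function `s (s - 1) Λ₀(s) + 1` taking the value `1` there. Taylor's formula
`h z = ∑_{k ≤ m} c_k z^k + z^(m+1) q z` becomes, after the substitution `z = 1 - 1/x`,
`x^m f x = ∑_{k ≤ m} c_k (x - 1)^k x^(m-k) + (x - 1)^(m+1) q(1 - 1/x) / x`.
By the Leibniz rule the terms of degree at most `m` are killed by `D^(m+1)`, so
`D^(m+1)[x^m f](1) = (m+1)! q 0 = D^(m+1) h (0)`, i.e. `λ^L_(m+1) = (m+1) λ^K_(m+1)`.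
-/

open Filter Topology Finset Function
open scoped Nat

section IteratedDeriv

variable {𝕜 : Type*} [NontriviallyNormedField 𝕜]

theorem iteratedDeriv_sub_pow_mul {g : 𝕜 → 𝕜} {a : 𝕜} {n : ℕ} (hg : ContDiffAt 𝕜 n g a) (j : ℕ) :
    iteratedDeriv n (fun x => (x - a) ^ j * g x) a =
      n.descFactorial j * iteratedDeriv (n - j) g a := by
  have hpow (i : ℕ) :
      iteratedDeriv i (fun x => (x - a) ^ j) a = if i = j then (j ! : 𝕜) else 0 := by
    simp only [iteratedDeriv_comp_sub_const i (· ^ j), sub_self, iteratedDeriv_fun_pow_zero,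
      Nat.cast_ite, Nat.cast_zero]
  rw [iteratedDeriv_fun_mul (by fun_prop) hg]
  simp only [hpow, mul_ite, ite_mul, mul_zero, zero_mul, sum_ite_eq', mem_range]
  split_ifs with h
  · rw [Nat.descFactorial_eq_factorial_mul_choose]; push_cast; ring
  · rw [Nat.descFactorial_eq_zero_iff_lt.mpr (by omega)]; simp

theorem iteratedDeriv_eq_factorial_mul_of_eventuallyEq {f g : 𝕜 → 𝕜} {p : ℕ → 𝕜 → 𝕜}
    {a : 𝕜} {n : ℕ} (hp : ∀ k < n, ContDiffAt 𝕜 n (p k) a)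
    (hp_jet : ∀ k < n, iteratedDeriv (n - k) (p k) a = 0) (hg : ContDiffAt 𝕜 n g a)
    (hf : f =ᶠ[𝓝 a] fun x => ∑ k ∈ range n, (x - a) ^ k * p k x + (x - a) ^ n * g x) :
    iteratedDeriv n f a = n ! * g a := by
  have hterm (k : ℕ) (hk : k ∈ range n) : ContDiffAt 𝕜 n (fun x => (x - a) ^ k * p k x) a := by
    fun_prop (disch := simp_all)
  rw [hf.iteratedDeriv_eq, iteratedDeriv_fun_add (.sum hterm) (by fun_prop),
    iteratedDeriv_fun_sum hterm, iteratedDeriv_sub_pow_mul hg, Nat.descFactorial_self,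
    Nat.sub_self, iteratedDeriv_zero, sum_eq_zero fun k hk => ?_, zero_add]
  rw [mem_range] at hk
  rw [iteratedDeriv_sub_pow_mul (hp k hk), hp_jet k hk, mul_zero]

theorem eq_sum_add_sub_pow_mul_iterate_dslope (f : 𝕜 → 𝕜) (a : 𝕜) (n : ℕ) (z : 𝕜) :
    f z = ∑ k ∈ range n, (z - a) ^ k * (swap dslope a)^[k] f a +
      (z - a) ^ n * (swap dslope a)^[n] f z := by
  induction n with
  | zero => simp
  | succ n ih =>
    have h := sub_smul_dslope ((swap dslope a)^[n] f) a z
    rw [smul_eq_mul] at h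
    rw [ih, sum_range_succ, iterate_succ_apply']
    simp only [swap]
    linear_combination -(z - a) ^ n * h

theorem AnalyticAt.iterate_dslope {f : 𝕜 → 𝕜} {a : 𝕜} (hf : AnalyticAt 𝕜 f a) (n : ℕ) :
    AnalyticAt 𝕜 ((swap dslope a)^[n] f) a :=
  let ⟨_, hp⟩ := hf
  (hp.has_fpower_series_iterate_dslope_fslope n).analyticAt

theorem iteratedDeriv_pow_mul_eq_iteratedDeriv_comp_one_div_one_sub [CompleteSpace 𝕜]
    {f : 𝕜 → 𝕜} (hf : AnalyticAt 𝕜 f 1) (m : ℕ) :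
    iteratedDeriv (m + 1) (fun x => x ^ m * f x) 1 =
      iteratedDeriv (m + 1) (fun z => f (1 / (1 - z))) 0 := by
  set h : 𝕜 → 𝕜 := fun z => f (1 / (1 - z))
  have hh : AnalyticAt 𝕜 h 0 := hf.comp_of_eq (by fun_prop (disch := norm_num)) (by norm_num)
  set c : ℕ → 𝕜 := fun k => (swap dslope 0)^[k] h 0
  set q : 𝕜 → 𝕜 := (swap dslope 0)^[m + 1] h
  have hq : AnalyticAt 𝕜 q 0 := hh.iterate_dslope _
  have hq' : AnalyticAt 𝕜 (fun x : 𝕜 => x⁻¹ * q (1 - x⁻¹)) 1 :=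
    (analyticAt_id.inv one_ne_zero).mul
      (hq.comp_of_eq (by fun_prop (disch := norm_num)) (by norm_num))
  have hexp : ∀ z, h z = ∑ k ∈ range (m + 1), (z - 0) ^ k * c k + (z - 0) ^ (m + 1) * q z :=
    eq_sum_add_sub_pow_mul_iterate_dslope h 0 (m + 1)
  have hRHS : iteratedDeriv (m + 1) h 0 = (m + 1)! * q 0 :=
    iteratedDeriv_eq_factorial_mul_of_eventuallyEq (p := fun k _ => c k)
      (fun _ _ => contDiffAt_const) (fun k hk => by simp [iteratedDeriv_const]; omega)
      hq.contDiffAt (.of_forall hexp)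
  have hLHS :
      iteratedDeriv (m + 1) (fun x => x ^ m * f x) 1 = (m + 1)! * (1⁻¹ * q (1 - 1⁻¹)) := by
    refine iteratedDeriv_eq_factorial_mul_of_eventuallyEq (p := fun k x => c k * x ^ (m - k))
      (fun _ _ => by fun_prop) (fun k hk => ?_) hq'.contDiffAt ?_
    · rw [iteratedDeriv_const_mul_field, iteratedDeriv_pow,
        Nat.descFactorial_eq_zero_iff_lt.mpr (by omega), Nat.cast_zero, zero_mul, mul_zero]
    · filter_upwards [eventually_ne_nhds one_ne_zero] with x hx
      have hfx : f x = h (1 - x⁻¹) := by simp [h]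
      have hx1 : x - 1 = x * (1 - x⁻¹) := by field_simp
      rw [hfx, hexp, hx1]
      generalize 1 - x⁻¹ = y
      simp only [sub_zero, mul_add, mul_sum]
      congr 1
      · refine sum_congr rfl fun k hk => ?_
        rw [← pow_sub_mul_pow x (Nat.lt_succ_iff.mp (mem_range.mp hk))]
        ring
      · rw [mul_pow, pow_succ x m]
        field_simp
  rw [hLHS, hRHS]
  simp

end IteratedDeriv

theorem twoXi_eq_of_re_pos {s : ℂ} (hs : 0 < s.re) (hs1 : s ≠ 1) :
    twoXi s = s * (s - 1) * completedRiemannZeta₀ s + 1 := by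
  have hs0 : s ≠ 0 := by rintro rfl; simp at hs
  have hΓ : Gammaℝ s ≠ 0 := Gammaℝ_ne_zero_of_re_pos hs
  have hξ : twoXi s = s * (s - 1) * (Gammaℝ s * riemannZeta s) := by
    rw [twoXi, Gammaℝ_def]; ring
  rw [hξ, riemannZeta_def_of_ne_zero hs0, mul_div_cancel₀ _ hΓ, completedRiemannZeta_eq]
  field_simp
  ring

/- `twoXi 1 = 0` rather than `1`, because the junk value `riemannZeta 1` is multiplied by `1 - 1`;
the logarithms still agree there since `log 0 = 0 = log 1`. -/
theorem log_twoXi_eventuallyEq : (fun s => log (twoXi s)) =ᶠ[𝓝 1]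
    fun s => log (s * (s - 1) * completedRiemannZeta₀ s + 1) := by
  filter_upwards [(isOpen_lt continuous_const continuous_re).mem_nhds
    (by norm_num : (0 : ℝ) < (1 : ℂ).re)] with s hs
  rcases eq_or_ne s 1 with rfl | hs1
  · simp [twoXi]
  · rw [twoXi_eq_of_re_pos hs hs1]

theorem analyticAt_log_completedZeta₀_one :
    AnalyticAt ℂ (fun s => log (s * (s - 1) * completedRiemannZeta₀ s + 1)) 1 :=
  AnalyticAt.clog ((((differentiable_id.mul (differentiable_id.sub_const 1)).mul
    differentiable_completedZeta₀).add_const 1).analyticAt 1) (by simp)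

/-- For every `n ≥ 1`, `λ^L_n = n·λ^K_n`:
`(1/(n-1)!)·D^n[x ↦ x^(n-1)·Log(2ξ(x))](1) = (n/n!)·D^n[z ↦ Log(2ξ(1/(1-z)))](0)`,
where `D^n` is the `n`-th iterated complex derivative and `Log` the principal complex
logarithm. -/
theorem stmt_15 (n : ℕ) (hn : 1 ≤ n) :
    (1 / (Nat.factorial (n - 1) : ℂ)) *
        iteratedDeriv n (fun x : ℂ => x ^ (n - 1) * Complex.log (twoXi x)) 1 =
      ((n : ℂ) / (Nat.factorial n : ℂ)) *
        iteratedDeriv n (fun z : ℂ => Complex.log (twoXi (1 / (1 - z)))) 0 := by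
  obtain ⟨m, rfl⟩ : ∃ m, n = m + 1 := ⟨n - 1, by omega⟩
  have hsubst : Tendsto (fun z : ℂ => 1 / (1 - z)) (𝓝 0) (𝓝 1) := by
    have hc : ContinuousAt (fun z : ℂ => 1 / (1 - z)) 0 := by fun_prop (disch := norm_num)
    simpa using hc.tendsto
  have hLHS : (fun x : ℂ => x ^ m * log (twoXi x)) =ᶠ[𝓝 1]
      fun x => x ^ m * log (x * (x - 1) * completedRiemannZeta₀ x + 1) := by
    filter_upwards [log_twoXi_eventuallyEq] with x hx
    rw [hx]
  have hRHS : (fun z : ℂ => log (twoXi (1 / (1 - z)))) =ᶠ[𝓝 0]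
      fun z => log (1 / (1 - z) * (1 / (1 - z) - 1) * completedRiemannZeta₀ (1 / (1 - z)) + 1) :=
    hsubst.eventually log_twoXi_eventuallyEq
  rw [Nat.add_sub_cancel, hLHS.iteratedDeriv_eq, hRHS.iteratedDeriv_eq,
    iteratedDeriv_pow_mul_eq_iteratedDeriv_comp_one_div_one_sub analyticAt_log_completedZeta₀_one,
    Nat.factorial_succ]
  push_cast
  field_simp
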